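/- Let Q ≥ 1 and let (μ_1, σ_1), …, (μ_Q, σ_Q) be pairwise distinct pairs with μ_q ≥ 0 and σ_q > 0 for all q. If a_1, …, a_Q ∈ ℝ satisfy ∑_{q=1}^Q a_q · exp(−2π²σ_q²τ²) · cos(2π·μ_q·τ) = 0 for every τ ∈ ℝ, then a_q = 0 for all q. In particular, the spectral weights of a spectral mixture kernel with fixed distinct components are uniquely determined by the values of the stationary kernel k(τ) on all of ℝ. -/

import Mathlib

/-!
Substituting `τ = i t` (legitimate since the combination extends to an entire function of `τ`)
turns the hypothesis into `∑ a_q exp(2π²σ_q² t²) cosh(2πμ_q t) = 0` for real `t`. As `t → ∞`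
the `q`-th term is of exact order `exp(2π²σ_q² t² + 2π|μ_q| t)`, so distinct pairs
`(σ_q², |μ_q|)` give terms that are strictly ordered in growth, lexicographically. In a vanishing
combination the fastest-growing term with nonzero coefficient would be `o` of itself.
-/

open Real Filter Topology Asymptotics

theorem linearIndependent_of_isLittleO {ι κ α 𝕜 : Type*} [LinearOrder κ] [NormedField 𝕜]
    {l : Filter α} {f : ι → α → 𝕜} (k : ι → κ) (hk : Function.Injective k)
    (hne : ∀ i, ∃ᶠ x in l, f i x ≠ 0) (hlt : ∀ i j, k i < k j → f i =o[l] f j) :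
    LinearIndependent 𝕜 f := by
  classical
  rw [linearIndependent_iff']
  intro s g hg i hi
  by_contra hgi
  obtain ⟨p, hp, hpmax⟩ := (s.filter (g · ≠ 0)).exists_max_image k ⟨i, by simp [hi, hgi]⟩
  rw [Finset.mem_filter] at hp
  have hrest : (fun x => ∑ j ∈ s.erase p, g j * f j x) =o[l] f p := by
    refine IsLittleO.fun_sum fun j hj => ?_
    by_cases hgj : g j = 0
    · simp [hgj]
    · have hjp : k j < k p := lt_of_le_of_ne (hpmax j (by simp_all))
        (hk.ne (Finset.ne_of_mem_erase hj))
      exact (hlt j p hjp).const_mul_left (g j)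
  have hsplit : ∀ x, g p * f p x = -∑ j ∈ s.erase p, g j * f j x := fun x => by
    have := congrFun hg x
    rw [Finset.sum_apply, ← Finset.add_sum_erase s _ hp.1] at this
    simp only [Pi.smul_apply, smul_eq_mul, Pi.zero_apply] at this
    linear_combination this
  have hself : (fun x => g p * f p x) =o[l] f p := by
    simpa only [hsplit] using hrest.neg_left
  exact isLittleO_irrefl (hne p) ((isLittleO_const_mul_left_iff hp.2).1 hself)

theorem tendsto_mul_sq_add_mul_atBot {A B : ℝ} (h : toLex (A, B) < toLex (0, 0)) :
    Tendsto (fun t => A * t ^ 2 + B * t) atTop atBot := by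
  rcases Prod.Lex.toLex_lt_toLex.1 h with hA | ⟨hA, hB⟩
  · have : Tendsto (fun t => t * (A * t + B)) atTop atBot :=
      tendsto_id.atTop_mul_atBot₀ <|
        (tendsto_id.const_mul_atTop_of_neg hA).atBot_add tendsto_const_nhds
    exact this.congr fun t => by ring
  · obtain rfl : A = 0 := hA
    exact (tendsto_id.const_mul_atTop_of_neg hB).congr fun t => by simp

theorem isLittleO_exp_mul_sq_add_mul {c b c' b' : ℝ} (h : toLex (c, b) < toLex (c', b')) :
    (fun t => exp (c * t ^ 2 + b * t)) =o[atTop] fun t => exp (c' * t ^ 2 + b' * t) := by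
  rw [isLittleO_exp_comp_exp_comp]
  have hlex : toLex (c - c', b - b') < toLex (0, 0) := by
    rcases Prod.Lex.toLex_lt_toLex.1 h with h | ⟨h1, h2⟩
    · exact Prod.Lex.toLex_lt_toLex.2 (Or.inl (sub_neg.2 h))
    · exact Prod.Lex.toLex_lt_toLex.2 (Or.inr ⟨sub_eq_zero.2 h1, sub_neg.2 h2⟩)
  exact tendsto_neg_atBot_atTop.comp (tendsto_mul_sq_add_mul_atBot hlex) |>.congr fun t => by
    simp only [Function.comp_apply]; ring

theorem cosh_le_exp_abs (x : ℝ) : cosh x ≤ exp |x| := by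
  rw [← cosh_abs, cosh_eq]
  linarith [exp_le_exp.2 (neg_le_self (abs_nonneg x))]

theorem exp_abs_le_two_mul_cosh (x : ℝ) : exp |x| ≤ 2 * cosh x := by
  rw [← cosh_abs, cosh_eq]
  linarith [exp_pos (-|x|)]

theorem isTheta_cosh_mul_exp_abs_mul (b : ℝ) :
    (fun t => cosh (b * t)) =Θ[atTop] fun t => exp (|b| * t) := by
  have habs : ∀ᶠ t in atTop, |b * t| = |b| * t := by
    filter_upwards [eventually_ge_atTop 0] with t ht
    rw [abs_mul, abs_of_nonneg ht]
  refine ⟨IsBigO.of_bound 1 ?_, IsBigO.of_bound 2 ?_⟩ <;>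
    filter_upwards [habs] with t ht <;>
    simp only [norm_of_nonneg (cosh_pos _).le, norm_of_nonneg (exp_pos _).le, ← ht]
  · simpa using cosh_le_exp_abs (b * t)
  · exact exp_abs_le_two_mul_cosh (b * t)

theorem isTheta_exp_mul_sq_mul_cosh (c b : ℝ) :
    (fun t => exp (c * t ^ 2) * cosh (b * t)) =Θ[atTop]
      fun t => exp (c * t ^ 2 + |b| * t) := by
  simpa only [exp_add] using (isTheta_refl (fun t => exp (c * t ^ 2)) atTop).mul
    (isTheta_cosh_mul_exp_abs_mul b)

theorem linearIndependent_exp_mul_sq_mul_cosh {ι : Type*} {c b : ι → ℝ}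
    (hinj : Function.Injective fun i => toLex (c i, |b i|)) :
    LinearIndependent ℝ fun i t => exp (c i * t ^ 2) * cosh (b i * t) := by
  refine linearIndependent_of_isLittleO _ hinj
    (fun i => Frequently.of_forall (f := atTop) fun t => (mul_pos (exp_pos _) (cosh_pos _)).ne')
    fun i j hij => ?_
  exact (isTheta_exp_mul_sq_mul_cosh _ _).isLittleO_congr_left.2
    ((isTheta_exp_mul_sq_mul_cosh _ _).isLittleO_congr_right.2
      (isLittleO_exp_mul_sq_add_mul hij))

theorem Differentiable.eq_zero_of_ofReal_eq_zero {F : ℂ → ℂ} (hF : Differentiable ℂ F)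
    (h : ∀ x : ℝ, F x = 0) : F = 0 := by
  have hofReal : Tendsto ((↑) : ℝ → ℂ) (𝓝[≠] 0) (𝓝[≠] 0) :=
    Complex.continuous_ofReal.continuousWithinAt.tendsto_nhdsWithin fun x hx => by simpa using hx
  have hfreq : ∃ᶠ z in 𝓝[≠] (0 : ℂ), F z = 0 := hofReal.frequently (Frequently.of_forall h)
  have hF' : AnalyticOnNhd ℂ F Set.univ := fun z _ => hF.analyticAt z
  funext z
  exact hF'.eqOn_zero_of_preconnected_of_frequently_eq_zero isPreconnected_univ
    (Set.mem_univ 0) hfreq (Set.mem_univ z)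

theorem sum_mul_exp_mul_sq_mul_cosh_eq_zero {ι : Type*} [Fintype ι] {a b c : ι → ℝ}
    (h : ∀ τ : ℝ, ∑ i, a i * exp (-(c i * τ ^ 2)) * cos (b i * τ) = 0) (t : ℝ) :
    ∑ i, a i * exp (c i * t ^ 2) * cosh (b i * t) = 0 := by
  set F : ℂ → ℂ := fun z => ∑ i, (a i : ℂ) * Complex.exp (-(c i * z ^ 2)) * Complex.cos (b i * z)
  have hF : Differentiable ℂ F := by fun_prop
  have hreal : ∀ x : ℝ, F x = 0 := fun x => by
    simpa [F] using congrArg ((↑) : ℝ → ℂ) (h x)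
  have := congrFun (hF.eq_zero_of_ofReal_eq_zero hreal) (t * Complex.I)
  simp only [F, mul_pow, Complex.I_sq, mul_neg, mul_one, neg_neg, ← mul_assoc, Complex.cos_mul_I,
    Pi.zero_apply] at this
  exact_mod_cast this

theorem spectralMixtureKernel_weights_unique_general
    (Q : ℕ) (μ σ : Fin Q → ℝ)
    (hμ : ∀ q, 0 ≤ μ q) (hσ : ∀ q, 0 < σ q)
    (hdist : Function.Injective fun q => (μ q, σ q))
    (a : Fin Q → ℝ)
    (h : ∀ τ : ℝ, ∑ q, a q * Real.exp (-(2 * π ^ 2 * σ q ^ 2 * τ ^ 2)) *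
        Real.cos (2 * π * μ q * τ) = 0) :
    ∀ q, a q = 0 := by
  have hcosh := sum_mul_exp_mul_sq_mul_cosh_eq_zero
    (c := fun q => 2 * π ^ 2 * σ q ^ 2) (b := fun q => 2 * π * μ q) h
  have hinj : Function.Injective fun q => toLex (2 * π ^ 2 * σ q ^ 2, |2 * π * μ q|) := by
    intro q r hqr
    obtain ⟨hσqr, hμqr⟩ := Prod.ext_iff.1 (toLex.injective hqr)
    have hσ2 : σ q ^ 2 = σ r ^ 2 := mul_left_cancel₀ (by positivity) hσqr
    rw [abs_of_nonneg (by have := hμ q; positivity), abs_of_nonneg (by have := hμ r; positivity)]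
      at hμqr
    exact hdist (Prod.ext (mul_left_cancel₀ (by positivity) hμqr)
      ((sq_eq_sq₀ (hσ q).le (hσ r).le).1 hσ2))
  refine Fintype.linearIndependent_iff.1 (linearIndependent_exp_mul_sq_mul_cosh hinj) a ?_
  funext t
  simpa [Finset.sum_apply, mul_assoc] using hcosh t

/-- **Linear independence of distinct spectral-mixture kernel components.**
If the pairs `(μ q, σ q)` are pairwise distinct with `μ q ≥ 0` and `σ q > 0`, and
the combination `∑ q, a q · exp(−2π²σ q²τ²) · cos(2π μ q τ)` vanishes for every
`τ ∈ ℝ`, then all coefficients `a q` vanish.  In particular, the spectral weights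
of a spectral mixture kernel with fixed distinct components are uniquely
determined by the values of the stationary kernel on all of `ℝ`. -/
theorem spectralMixtureKernel_weights_unique
    (Q : ℕ) (hQ : 1 ≤ Q) (μ σ : Fin Q → ℝ)
    (hμ : ∀ q, 0 ≤ μ q) (hσ : ∀ q, 0 < σ q)
    (hdist : Function.Injective fun q => (μ q, σ q))
    (a : Fin Q → ℝ)
    (h : ∀ τ : ℝ, ∑ q, a q * Real.exp (-(2 * π ^ 2 * σ q ^ 2 * τ ^ 2)) *
        Real.cos (2 * π * μ q * τ) = 0) :
    ∀ q, a q = 0 :=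
  spectralMixtureKernel_weights_unique_general Q μ σ hμ hσ hdist a h
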